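/- Let κ > 0, k ∈ ℝ² with |k| = κ, let θ be a unit vector, let n ∈ ℕ, and let f₀, f₁, …, f_{n+1} ∈ ℂ. Let ψ₁ : (0,∞) → ℂ satisfy ψ₁(s) − √(2/(πκ s)) e^{i(κs − π/4)} Σ_{j=0}^{n+1} f_j s^{−j} = O(s^{−n − 5/2}) as s → ∞. Define ψ_{1,n}(s) = √(2/(πκ s)) e^{i(κs − π/4)} Σ_{j=0}^{n} f_j s^{−j}, a(s) = √s ( |e^{i s (k·θ)} + ψ₁(s)|² − 1 ), a_n(s) = √s ( |e^{i s (k·θ)} + ψ_{1,n}(s)|² − 1 ), and b_n(s) = s^{n+1} ( a(s) − a_n(s) ). Then b_n(s) − √(2/(πκ)) ( e^{i(κs − π/4 − s(k·θ))} f_{n+1} + e^{−i(κs − π/4 − s(k·θ))} \overline{f_{n+1}} ) = O(s^{−1/2}) as s → ∞. -/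

import Mathlib

open Complex Filter Asymptotics RealInnerProductSpace

noncomputable section

/-- The plane ℝ². -/
abbrev E2 := EuclideanSpace ℝ (Fin 2)

/-- The leading oscillatory term `√(2/(πκ)) (e^{i(κs − s k·θ − π/4)} f₀ + e^{−i(κs − s k·θ − π/4)} f̄₀)`
of the normalized intensity deviation. -/
def oscTerm (κ kθ : ℝ) (f₀ : ℂ) (s : ℝ) : ℂ :=
  (Real.sqrt (2 / (Real.pi * κ)) : ℂ) *
    (Complex.exp (Complex.I * ((κ * s - s * kθ - Real.pi / 4 : ℝ) : ℂ)) * f₀ +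
      Complex.exp (-(Complex.I * ((κ * s - s * kθ - Real.pi / 4 : ℝ) : ℂ))) * (starRingEnd ℂ) f₀)

/-- The truncated far-field expansion
`ψ_{1,n}(s) = √(2/(πκs)) e^{i(κs − π/4)} Σ_{j=0}^{n} f_j s^{−j}`. -/
def partialFar (κ : ℝ) (f : ℕ → ℂ) (n : ℕ) (s : ℝ) : ℂ :=
  (Real.sqrt (2 / (Real.pi * κ * s)) : ℂ) *
    Complex.exp (Complex.I * ((κ * s - Real.pi / 4 : ℝ) : ℂ)) *
    ∑ j ∈ Finset.range (n + 1), f j / (s : ℂ) ^ j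

/-- The normalized intensity deviation `a(s) = √s (|e^{is k·θ} + ψ(s)|² − 1)` along the ray. -/
def intensityDev (kθ : ℝ) (ψ : ℝ → ℂ) (s : ℝ) : ℂ :=
  ((Real.sqrt s *
      (‖Complex.exp (Complex.I * ((s * kθ : ℝ) : ℂ)) + ψ s‖ ^ 2 - 1) : ℝ) : ℂ)
/-!
Split `ψ₁ = ψ_{1,n} + t + r`, where `t = √(2/(πκs)) e^{i(κs-π/4)} f_{n+1} s^{-n-1}` is the
next term of the far-field expansion and `r = O(s^{-n-5/2})`. With `u = e^{is k·θ}`,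

  `|u + ψ₁|² - |u + ψ_{1,n}|² = 2 Re(u t̄) + 2 Re(u r̄) + 2 Re(ψ_{1,n} (t + r)‾) + |t + r|²`.

Multiplied by `s^{n+3/2}`, the first term is exactly the oscillatory term; since
`ψ_{1,n} = O(s^{-1/2})` and `t + r = O(s^{-n-3/2})`, the others are `O(s^{-1/2})`.
-/

def planeWave (c s : ℝ) : ℂ := Complex.exp (Complex.I * ((s * c : ℝ) : ℂ))

lemma Asymptotics.IsBigO.trans_rpow_le {E : Type*} [Norm E] {f : ℝ → E} {a b : ℝ}
    (hf : f =O[atTop] fun s : ℝ => s ^ a) (hab : a ≤ b) :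
    f =O[atTop] fun s : ℝ => s ^ b := by
  refine hf.trans (Eventually.isBigO ?_)
  filter_upwards [eventually_ge_atTop 1] with s hs
  rw [Real.norm_of_nonneg (Real.rpow_nonneg (zero_le_one.trans hs) a)]
  exact Real.rpow_le_rpow_of_exponent_le hs hab

lemma const_div_pow_isBigO_rpow (c : ℂ) (k : ℕ) :
    (fun s : ℝ => c / (s : ℂ) ^ k) =O[atTop] fun s : ℝ => s ^ (-(k : ℝ)) := by
  refine IsBigO.of_bound ‖c‖ ?_
  filter_upwards [eventually_gt_atTop 0] with s hs
  rw [norm_div, norm_pow, Complex.norm_real, Real.norm_of_nonneg hs.le,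
    Real.norm_of_nonneg (Real.rpow_nonneg hs.le _), Real.rpow_neg hs.le, Real.rpow_natCast,
    div_eq_mul_inv]

lemma conj_exp_I_mul_ofReal (x : ℝ) :
    starRingEnd ℂ (Complex.exp (Complex.I * x)) = Complex.exp (-(Complex.I * x)) := by
  rw [← Complex.exp_conj, map_mul, Complex.conj_I, Complex.conj_ofReal, neg_mul]

lemma pow_mul_sqrt_eq_rpow (n : ℕ) {s : ℝ} (hs : 0 < s) :
    s ^ (n + 1) * Real.sqrt s = s ^ ((n : ℝ) + 3 / 2) := by
  rw [Real.sqrt_eq_rpow, ← Real.rpow_natCast, ← Real.rpow_add hs]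
  norm_num [add_assoc]

lemma re_add_mul_conj_sub (u a b c : ℂ) :
    ((u + a) * starRingEnd ℂ (c - a)).re =
      (u * starRingEnd ℂ (b - a)).re + (u * starRingEnd ℂ (c - b)).re +
        (a * starRingEnd ℂ (c - a)).re := by
  simp only [Complex.mul_re, Complex.add_re, Complex.add_im, Complex.sub_re, Complex.sub_im,
    Complex.conj_re, Complex.conj_im]
  ring

lemma norm_add_sq_sub_norm_sq (x d : ℂ) :
    ‖x + d‖ ^ 2 - ‖x‖ ^ 2 = 2 * (x * starRingEnd ℂ d).re + Complex.normSq d := by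
  rw [Complex.sq_norm, Complex.sq_norm, Complex.normSq_add]
  ring

lemma intensityDev_sub_intensityDev (c : ℝ) (ψ φ : ℝ → ℂ) (s : ℝ) :
    intensityDev c ψ s - intensityDev c φ s =
      ((Real.sqrt s * (2 * ((planeWave c s + φ s) * starRingEnd ℂ (ψ s - φ s)).re +
        Complex.normSq (ψ s - φ s)) : ℝ) : ℂ) := by
  simp only [intensityDev, planeWave, ← Complex.ofReal_sub]
  congr 1
  set u := Complex.exp (Complex.I * ((s * c : ℝ) : ℂ))
  have h := norm_add_sq_sub_norm_sq (u + φ s) (ψ s - φ s)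
  rw [add_add_sub_cancel] at h
  linear_combination Real.sqrt s * h

section FarField

variable (κ : ℝ) (f : ℕ → ℂ)

lemma sqrt_two_div_mul_eq {s : ℝ} (hs : 0 ≤ s) :
    Real.sqrt (2 / (Real.pi * κ * s)) = Real.sqrt (2 / (Real.pi * κ)) / Real.sqrt s := by
  rw [← div_div, Real.sqrt_div' _ hs]

lemma norm_sqrt_mul_exp_I (x : ℝ) {s : ℝ} (hs : 0 ≤ s) :
    ‖(Real.sqrt (2 / (Real.pi * κ * s)) : ℂ) * Complex.exp (Complex.I * x)‖ =
      Real.sqrt (2 / (Real.pi * κ)) * s ^ (-(1 : ℝ) / 2) := by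
  rw [norm_mul, Complex.norm_exp_I_mul_ofReal, mul_one, Complex.norm_real,
    Real.norm_of_nonneg (Real.sqrt_nonneg _), sqrt_two_div_mul_eq κ hs, div_eq_mul_inv,
    Real.sqrt_eq_rpow s, ← Real.rpow_neg hs, neg_div]

lemma sqrt_mul_exp_I_isBigO (φ : ℝ → ℝ) :
    (fun s : ℝ => (Real.sqrt (2 / (Real.pi * κ * s)) : ℂ) * Complex.exp (Complex.I * φ s))
      =O[atTop] fun s : ℝ => s ^ (-(1 : ℝ) / 2) := by
  refine IsBigO.of_bound (Real.sqrt (2 / (Real.pi * κ))) ?_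
  filter_upwards [eventually_gt_atTop 0] with s hs
  rw [norm_sqrt_mul_exp_I κ _ hs.le, Real.norm_of_nonneg (Real.rpow_nonneg hs.le _)]

lemma partialFar_isBigO (m : ℕ) :
    partialFar κ f m =O[atTop] fun s : ℝ => s ^ (-(1 : ℝ) / 2) := by
  have hsum : (fun s : ℝ => ∑ j ∈ Finset.range (m + 1), f j / (s : ℂ) ^ j)
      =O[atTop] fun s : ℝ => s ^ (0 : ℝ) :=
    IsBigO.fun_sum fun j _ =>
      (const_div_pow_isBigO_rpow (f j) j).trans_rpow_le (by simp)
  exact (sqrt_mul_exp_I_isBigO κ _).mul_atTop_rpow_of_isBigO_rpow _ _ _ hsum (by norm_num)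

lemma partialFar_succ_sub (n : ℕ) (s : ℝ) :
    partialFar κ f (n + 1) s - partialFar κ f n s =
      (Real.sqrt (2 / (Real.pi * κ * s)) : ℂ) *
        Complex.exp (Complex.I * ((κ * s - Real.pi / 4 : ℝ) : ℂ)) *
        (f (n + 1) / (s : ℂ) ^ (n + 1)) := by
  rw [partialFar, partialFar, Finset.sum_range_succ]
  ring

lemma partialFar_succ_sub_isBigO (n : ℕ) :
    (fun s : ℝ => partialFar κ f (n + 1) s - partialFar κ f n s)
      =O[atTop] fun s : ℝ => s ^ (-(n : ℝ) - 3 / 2) := by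
  simp only [partialFar_succ_sub]
  refine (sqrt_mul_exp_I_isBigO κ _).mul_atTop_rpow_of_isBigO_rpow _ _ _
    (const_div_pow_isBigO_rpow (f (n + 1)) (n + 1)) ?_
  push_cast
  linarith

lemma oscTerm_eq (c : ℝ) (n : ℕ) {s : ℝ} (hs : 0 < s) :
    oscTerm κ c (f (n + 1)) s = (s : ℂ) ^ (n + 1) * ((Real.sqrt s *
      (2 * (planeWave c s * starRingEnd ℂ (partialFar κ f (n + 1) s - partialFar κ f n s)).re)
        : ℝ) : ℂ) := by
  have hsqrt : (Real.sqrt s : ℂ) ≠ 0 := by exact_mod_cast (Real.sqrt_pos.2 hs).ne'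
  have hs' : (s : ℂ) ≠ 0 := by exact_mod_cast hs.ne'
  have hphase : Complex.exp (Complex.I * ((κ * s - s * c - Real.pi / 4 : ℝ) : ℂ)) =
      Complex.exp (Complex.I * ((κ * s - Real.pi / 4 : ℝ) : ℂ)) *
        Complex.exp (-(Complex.I * ((s * c : ℝ) : ℂ))) := by
    rw [← Complex.exp_add]
    push_cast
    ring_nf
  have hphase_neg : Complex.exp (-(Complex.I * ((κ * s - s * c - Real.pi / 4 : ℝ) : ℂ))) =
      Complex.exp (-(Complex.I * ((κ * s - Real.pi / 4 : ℝ) : ℂ))) *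
        Complex.exp (Complex.I * ((s * c : ℝ) : ℂ)) := by
    rw [← Complex.exp_add]
    push_cast
    ring_nf
  rw [oscTerm, hphase, hphase_neg, Complex.ofReal_mul (Real.sqrt s), ← Complex.add_conj,
    partialFar_succ_sub, sqrt_two_div_mul_eq κ hs.le, planeWave]
  simp only [map_mul, map_div₀, map_pow, Complex.conj_conj, Complex.conj_ofReal]
  simp only [conj_exp_I_mul_ofReal]
  push_cast
  field_simp
  ring

end FarField

lemma two_mul_re_mul_conj_isBigO {α : Type*} {l : Filter α} {a b : α → ℂ} {g : α → ℝ}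
    (h : (fun x => ‖a x‖ * ‖b x‖) =O[l] g) :
    (fun x => 2 * (a x * starRingEnd ℂ (b x)).re) =O[l] g := by
  refine (isBigO_of_le' (c := 2) _ fun x => ?_).trans h
  rw [Real.norm_eq_abs, abs_mul, abs_two, Real.norm_of_nonneg (by positivity)]
  gcongr
  exact (Complex.abs_re_le_norm _).trans_eq (by rw [norm_mul, Complex.norm_conj])

lemma intensityDev_remainder_isBigO (κ : ℝ) (f : ℕ → ℂ) (c : ℝ) (n : ℕ) (ψ₁ : ℝ → ℂ)
    (hψ : (fun s : ℝ => ψ₁ s - partialFar κ f (n + 1) s) =O[atTop]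
      fun s : ℝ => s ^ (-(n : ℝ) - 5 / 2)) :
    (fun s : ℝ => 2 * (planeWave c s * starRingEnd ℂ (ψ₁ s - partialFar κ f (n + 1) s)).re +
        2 * (partialFar κ f n s * starRingEnd ℂ (ψ₁ s - partialFar κ f n s)).re +
        Complex.normSq (ψ₁ s - partialFar κ f n s))
      =O[atTop] fun s : ℝ => s ^ (-(n : ℝ) - 2) := by
  have hn : (0 : ℝ) ≤ n := n.cast_nonneg
  have hd : (fun s : ℝ => ψ₁ s - partialFar κ f n s) =O[atTop]
      fun s : ℝ => s ^ (-(n : ℝ) - 3 / 2) :=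
    ((hψ.trans_rpow_le (by linarith)).add (partialFar_succ_sub_isBigO κ f n)).congr_left
      fun s => sub_add_sub_cancel _ _ _
  have hwave : (fun s => 2 * (planeWave c s *
      starRingEnd ℂ (ψ₁ s - partialFar κ f (n + 1) s)).re) =O[atTop]
        fun s : ℝ => s ^ (-(n : ℝ) - 2) :=
    two_mul_re_mul_conj_isBigO <| (hψ.norm_left.trans_rpow_le (by linarith)).congr_left
      fun s => by rw [planeWave, Complex.norm_exp_I_mul_ofReal, one_mul]
  have hcross : (fun s => 2 * (partialFar κ f n s *
      starRingEnd ℂ (ψ₁ s - partialFar κ f n s)).re) =O[atTop]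
        fun s : ℝ => s ^ (-(n : ℝ) - 2) :=
    two_mul_re_mul_conj_isBigO <|
      (partialFar_isBigO κ f n).norm_left.mul_atTop_rpow_of_isBigO_rpow _ _ _ hd.norm_left
        (by linarith)
  have hsq : (fun s => Complex.normSq (ψ₁ s - partialFar κ f n s)) =O[atTop]
      fun s : ℝ => s ^ (-(n : ℝ) - 2) :=
    (hd.norm_left.mul_atTop_rpow_of_isBigO_rpow _ _ _ hd.norm_left (by linarith)).congr_left
      fun s => by rw [Pi.mul_apply, Complex.normSq_eq_norm_sq, sq]
  exact (hwave.add hcross).add hsq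

theorem intensity_deviation_induction_step_general
    (κ : ℝ) (k θ : E2)
    (n : ℕ) (f : ℕ → ℂ) (ψ₁ : ℝ → ℂ)
    (hψ : (fun s : ℝ => ψ₁ s - partialFar κ f (n + 1) s) =O[atTop]
      fun s : ℝ => s ^ (-(n : ℝ) - 5 / 2)) :
    (fun s : ℝ =>
        (s : ℂ) ^ (n + 1) *
            (intensityDev ⟪k, θ⟫ ψ₁ s - intensityDev ⟪k, θ⟫ (partialFar κ f n) s) -
          oscTerm κ ⟪k, θ⟫ (f (n + 1)) s)
      =O[atTop] fun s : ℝ => s ^ (-(1 : ℝ) / 2) := by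
  have hscaled :=
    (isBigO_refl (fun s : ℝ => s ^ ((n : ℝ) + 3 / 2)) atTop).mul_atTop_rpow_of_isBigO_rpow _ _
      (-(1 : ℝ) / 2) (intensityDev_remainder_isBigO κ f ⟪k, θ⟫ n ψ₁ hψ) (by linarith)
  refine (isBigO_ofReal_left.2 hscaled).congr' ?_ EventuallyEq.rfl
  filter_upwards [eventually_gt_atTop 0] with s hs
  rw [intensityDev_sub_intensityDev, oscTerm_eq κ f _ n hs,
    re_add_mul_conj_sub _ _ (partialFar κ f (n + 1) s), Pi.mul_apply,
    ← pow_mul_sqrt_eq_rpow n hs]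
  push_cast
  ring

/-- Formula (4.8): the induction step for recovering the far-field coefficients from the
intensity of the total field along a ray. -/
theorem intensity_deviation_induction_step
    (κ : ℝ) (hκ : 0 < κ) (k θ : E2) (hk : ‖k‖ = κ) (hθ : ‖θ‖ = 1)
    (n : ℕ) (f : ℕ → ℂ) (ψ₁ : ℝ → ℂ)
    (hψ : (fun s : ℝ => ψ₁ s - partialFar κ f (n + 1) s) =O[atTop]
      fun s : ℝ => s ^ (-(n : ℝ) - 5 / 2)) :
    (fun s : ℝ =>
        (s : ℂ) ^ (n + 1) *
            (intensityDev ⟪k, θ⟫ ψ₁ s - intensityDev ⟪k, θ⟫ (partialFar κ f n) s) -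
          oscTerm κ ⟪k, θ⟫ (f (n + 1)) s)
      =O[atTop] fun s : ℝ => s ^ (-(1 : ℝ) / 2) :=
  intensity_deviation_induction_step_general κ k θ n f ψ₁ hψ
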